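/- G has no proper colouring with 3 colours: there is no function c from the unit sphere to a 3-element set such that orthogonal unit vectors always receive different values. -/

import Mathlib

open scoped RealInnerProductSpace

/-!
Scaling an integer vector to the sphere preserves orthogonality, so a proper colouring of the
sphere yields one of the nonzero vectors of `ℤ³`; we rule that out on the 13 rays of the cube.
The three axes get three different colours, and the two face diagonals in the coordinate plane
orthogonal to an axis get the other two. Each body diagonal is orthogonal to one face diagonal
in each coordinate plane, and the four body diagonals realise exactly the four such choices with
an odd number of face diagonals having a negative entry. Of the two choices that see three
different colours, exactly one has this parity, so some body diagonal has no colour left.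
-/

open Matrix

def Rainbow {α : Type*} (a b c : α) : Prop := a ≠ b ∧ a ≠ c ∧ b ≠ c

theorem Rainbow.eq_or_eq_or_eq {a b c : Fin 3} (h : Rainbow a b c) (d : Fin 3) :
    d = a ∨ d = b ∨ d = c := by
  obtain ⟨hab, hac, hbc⟩ := h
  omega

theorem Rainbow.odd_transversal {x y z p p' q q' r r' : Fin 3}
    (hxyz : Rainbow x y z) (hp : Rainbow x p p') (hq : Rainbow y q q') (hr : Rainbow z r r') :
    Rainbow p' q' r' ∨ Rainbow p q r' ∨ Rainbow p q' r ∨ Rainbow p' q r := by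
  unfold Rainbow at *
  omega

def IsOrthogonalityColouring {n : ℕ} {α : Type*} (κ : (Fin n → ℤ) → α) : Prop :=
  ∀ ⦃v w : Fin n → ℤ⦄, v ≠ 0 → w ≠ 0 → v ⬝ᵥ w = 0 → κ v ≠ κ w

namespace IsOrthogonalityColouring

variable {n : ℕ}

theorem rainbow {α : Type*} {κ : (Fin n → ℤ) → α} (hκ : IsOrthogonalityColouring κ)
    (u v w : Fin n → ℤ)
    (h : u ≠ 0 ∧ v ≠ 0 ∧ w ≠ 0 ∧ u ⬝ᵥ v = 0 ∧ u ⬝ᵥ w = 0 ∧ v ⬝ᵥ w = 0) :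
    Rainbow (κ u) (κ v) (κ w) := by
  obtain ⟨hu, hv, hw, huv, huw, hvw⟩ := h
  exact ⟨hκ hu hv huv, hκ hu hw huw, hκ hv hw hvw⟩

theorem false_of_rainbow {κ : (Fin n → ℤ) → Fin 3} (hκ : IsOrthogonalityColouring κ)
    {u v w : Fin n → ℤ} (huvw : Rainbow (κ u) (κ v) (κ w)) (d : Fin n → ℤ)
    (h : d ≠ 0 ∧ u ≠ 0 ∧ v ≠ 0 ∧ w ≠ 0 ∧ d ⬝ᵥ u = 0 ∧ d ⬝ᵥ v = 0 ∧ d ⬝ᵥ w = 0) : False := by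
  obtain ⟨hd, hu, hv, hw, hdu, hdv, hdw⟩ := h
  rcases huvw.eq_or_eq_or_eq (κ d) with h | h | h
  exacts [hκ hd hu hdu h, hκ hd hv hdv h, hκ hd hw hdw h]

end IsOrthogonalityColouring

theorem not_isOrthogonalityColouring_fin_three (κ : (Fin 3 → ℤ) → Fin 3) :
    ¬ IsOrthogonalityColouring κ := by
  intro hκ
  have axes := hκ.rainbow ![1, 0, 0] ![0, 1, 0] ![0, 0, 1] (by decide)
  have yz := hκ.rainbow ![1, 0, 0] ![0, 1, 1] ![0, 1, -1] (by decide)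
  have xz := hκ.rainbow ![0, 1, 0] ![1, 0, 1] ![1, 0, -1] (by decide)
  have xy := hκ.rainbow ![0, 0, 1] ![1, 1, 0] ![1, -1, 0] (by decide)
  rcases axes.odd_transversal yz xz xy with h | h | h | h
  · exact hκ.false_of_rainbow h ![1, 1, 1] (by decide)
  · exact hκ.false_of_rainbow h ![1, 1, -1] (by decide)
  · exact hκ.false_of_rainbow h ![1, -1, 1] (by decide)
  · exact hκ.false_of_rainbow h ![1, -1, -1] (by decide)

def intToEuclidean {n : ℕ} (v : Fin n → ℤ) : EuclideanSpace ℝ (Fin n) :=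
  WithLp.toLp 2 (Int.cast ∘ v)

theorem inner_intToEuclidean {n : ℕ} (v w : Fin n → ℤ) :
    ⟪intToEuclidean v, intToEuclidean w⟫ = ((v ⬝ᵥ w : ℤ) : ℝ) := by
  rw [intToEuclidean, intToEuclidean, EuclideanSpace.inner_toLp_toLp, star_trivial,
    dotProduct_comm]
  exact ((Int.castRingHom ℝ).map_dotProduct v w).symm

theorem intToEuclidean_ne_zero {n : ℕ} {v : Fin n → ℤ} (hv : v ≠ 0) : intToEuclidean v ≠ 0 := by
  contrapose! hv
  ext i
  simpa [intToEuclidean] using congr($hv i)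

theorem exists_isOrthogonalityColouring_of_sphere {n : ℕ} {α : Type*} [Nonempty α]
    (c : {x : EuclideanSpace ℝ (Fin n) // ‖x‖ = 1} → α)
    (hc : ∀ u v : {x : EuclideanSpace ℝ (Fin n) // ‖x‖ = 1},
      ⟪(u : EuclideanSpace ℝ (Fin n)), (v : EuclideanSpace ℝ (Fin n))⟫ = 0 → c u ≠ c v) :
    ∃ κ : (Fin n → ℤ) → α, IsOrthogonalityColouring κ := by
  refine ⟨fun v => if hv : v = 0 then Classical.arbitrary α else
    c ⟨NormedSpace.normalize (intToEuclidean v),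
      NormedSpace.norm_normalize_eq_one_iff.2 (intToEuclidean_ne_zero hv)⟩,
    fun v w hv hw hvw => ?_⟩
  simp only [hv, hw, dite_false]
  apply hc
  dsimp only
  rw [NormedSpace.normalize, NormedSpace.normalize, real_inner_smul_left, real_inner_smul_right,
    inner_intToEuclidean, hvw, Int.cast_zero, mul_zero, mul_zero]

theorem sphere_no_three_colouring :
    ¬ ∃ c : {x : EuclideanSpace ℝ (Fin 3) // ‖x‖ = 1} → Fin 3,
      ∀ u v : {x : EuclideanSpace ℝ (Fin 3) // ‖x‖ = 1},
        ⟪(u : EuclideanSpace ℝ (Fin 3)), (v : EuclideanSpace ℝ (Fin 3))⟫ = 0 →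
          c u ≠ c v := by
  rintro ⟨c, hc⟩
  obtain ⟨κ, hκ⟩ := exists_isOrthogonalityColouring_of_sphere c hc
  exact not_isOrthogonalityColouring_fin_three κ hκ
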